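/- arXiv:q-alg/9611010 — 4 statements merged into one kernel-verified Lean document; each statement's English description precedes it below -/
import Mathlib

section
/- Generalized pentagon identity for the fusion element (Proposition 1, eq. (2.23)): In the algebra A ⊗ A ⊗ A ⊗ V the identity (1 ⊗ F) · (id_A ⊗ Δ ⊗ id_V)(F) = Φ₃ · F₁₂ · Φ₃⁻¹ · (Δ ⊗ id_A ⊗ id_V)(F) holds, where F₁₂ (resp. 1 ⊗ F) denotes F with its two A-legs placed in tensor positions 1,2 (resp. 2,3) and its V-leg in position 4, and Φ₃ denotes Φ with its A-leg in position 3 and its V-leg in position 4. -/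
open scoped TensorProduct

noncomputable section

namespace Stmt0

variable (A V : Type*) [Ring A] [Bialgebra ℂ A] [Ring V] [Algebra ℂ V]

/-- Map units along a `ℂ`-algebra homomorphism. -/
def uMap {X Y : Type*} [Semiring X] [Semiring Y] [Algebra ℂ X] [Algebra ℂ Y] (f : X →ₐ[ℂ] Y) :
    Xˣ →* Yˣ :=
  Units.map (f : X →* Y)

/-- Embedding of `A ⊗ V` into `A ⊗ A ⊗ V` with legs in positions 1 and 3. -/
def leg13 : A ⊗[ℂ] V →ₐ[ℂ] A ⊗[ℂ] (A ⊗[ℂ] V) :=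
  Algebra.TensorProduct.map (AlgHom.id ℂ A) Algebra.TensorProduct.includeRight

/-- Embedding of `A ⊗ V` into `A ⊗ A ⊗ V` with legs in positions 2 and 3. -/
def leg23 : A ⊗[ℂ] V →ₐ[ℂ] A ⊗[ℂ] (A ⊗[ℂ] V) :=
  Algebra.TensorProduct.includeRight

/-- `Δ ⊗ id_V : A ⊗ V → A ⊗ A ⊗ V`. -/
def deltaId : A ⊗[ℂ] V →ₐ[ℂ] A ⊗[ℂ] (A ⊗[ℂ] V) :=
  (Algebra.TensorProduct.assoc ℂ ℂ ℂ A A V).toAlgHom.comp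
    (Algebra.TensorProduct.map (Bialgebra.comulAlgHom ℂ A) (AlgHom.id ℂ V))

/-- The fusion element `F = Φ₂ · Φ₁ · ((Δ ⊗ id_V)(Φ))⁻¹ ∈ A ⊗ A ⊗ V`. -/
def fusion (Φ : (A ⊗[ℂ] V)ˣ) : (A ⊗[ℂ] (A ⊗[ℂ] V))ˣ :=
  uMap (leg23 A V) Φ * uMap (leg13 A V) Φ * (uMap (deltaId A V) Φ)⁻¹

/-- Embedding `A ⊗ A ⊗ V → A ⊗ A ⊗ A ⊗ V`, legs to positions 2, 3 and 4 (i.e. `X ↦ 1 ⊗ X`). -/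
def emb234 : A ⊗[ℂ] (A ⊗[ℂ] V) →ₐ[ℂ] A ⊗[ℂ] (A ⊗[ℂ] (A ⊗[ℂ] V)) :=
  Algebra.TensorProduct.includeRight

/-- Embedding `A ⊗ A ⊗ V → A ⊗ A ⊗ A ⊗ V`, legs to positions 1, 2 and 4 (i.e. `X ↦ X₁₂` with
the `V`-leg in position 4). -/
def emb124 : A ⊗[ℂ] (A ⊗[ℂ] V) →ₐ[ℂ] A ⊗[ℂ] (A ⊗[ℂ] (A ⊗[ℂ] V)) :=
  Algebra.TensorProduct.map (AlgHom.id ℂ A)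
    (Algebra.TensorProduct.map (AlgHom.id ℂ A) Algebra.TensorProduct.includeRight)

/-- Embedding `A ⊗ V → A ⊗ A ⊗ A ⊗ V`, legs to positions 3 and 4 (i.e. `Φ ↦ Φ₃`). -/
def emb34 : A ⊗[ℂ] V →ₐ[ℂ] A ⊗[ℂ] (A ⊗[ℂ] (A ⊗[ℂ] V)) :=
  AlgHom.comp Algebra.TensorProduct.includeRight Algebra.TensorProduct.includeRight

/-- `id_A ⊗ Δ ⊗ id_V : A ⊗ A ⊗ V → A ⊗ A ⊗ A ⊗ V`. -/
def idDeltaId : A ⊗[ℂ] (A ⊗[ℂ] V) →ₐ[ℂ] A ⊗[ℂ] (A ⊗[ℂ] (A ⊗[ℂ] V)) :=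
  Algebra.TensorProduct.map (AlgHom.id ℂ A) (deltaId A V)

/-- `Δ ⊗ id_A ⊗ id_V : A ⊗ A ⊗ V → A ⊗ A ⊗ A ⊗ V`. -/
def deltaIdId : A ⊗[ℂ] (A ⊗[ℂ] V) →ₐ[ℂ] A ⊗[ℂ] (A ⊗[ℂ] (A ⊗[ℂ] V)) :=
  (Algebra.TensorProduct.assoc ℂ ℂ ℂ A A (A ⊗[ℂ] V)).toAlgHom.comp
    (Algebra.TensorProduct.map (Bialgebra.comulAlgHom ℂ A) (AlgHom.id ℂ (A ⊗[ℂ] V)))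

set_option synthInstance.maxHeartbeats 1000000
set_option maxHeartbeats 1600000

lemma uMap_uMap {X Y Z : Type*} [Semiring X] [Semiring Y] [Semiring Z]
    [Algebra ℂ X] [Algebra ℂ Y] [Algebra ℂ Z] (f : Y →ₐ[ℂ] Z) (g : X →ₐ[ℂ] Y) (x : Xˣ) :
    uMap f (uMap g x) = uMap (f.comp g) x :=
  Units.ext rfl

lemma assoc_fix {W : Type*} [Ring W] [Algebra ℂ W] (w : W) (c : A ⊗[ℂ] A) :
    (Algebra.TensorProduct.assoc ℂ ℂ ℂ A A W) (c ⊗ₜ[ℂ] w) =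
      LinearMap.lTensor A ((TensorProduct.mk ℂ A W).flip w) c := by
  induction c using TensorProduct.induction_on with
  | zero => simp
  | tmul x y => simp [TensorProduct.mk]
  | add x y hx hy => simp [TensorProduct.add_tmul, hx, hy]

lemma assoc_fix' {W : Type*} [AddCommMonoid W] [Module ℂ W] (w : W) (c : A ⊗[ℂ] A) :
    (TensorProduct.assoc ℂ A A W) (c ⊗ₜ[ℂ] w) =
      LinearMap.lTensor A ((TensorProduct.mk ℂ A W).flip w) c := by
  induction c using TensorProduct.induction_on with
  | zero => simp
  | tmul x y => simp [TensorProduct.mk]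
  | add x y hx hy => simp [TensorProduct.add_tmul, hx, hy]

lemma deltaId_apply (a : A) (v : V) :
    deltaId A V (a ⊗ₜ[ℂ] v) =
      LinearMap.lTensor A ((TensorProduct.mk ℂ A V).flip v) (Coalgebra.comul a) := by
  have : deltaId A V (a ⊗ₜ[ℂ] v)
      = (Algebra.TensorProduct.assoc ℂ ℂ ℂ A A V) ((Coalgebra.comul a) ⊗ₜ[ℂ] v) := by
    simp [deltaId]
  rw [this, assoc_fix]

lemma deltaIdId_apply (a : A) (x : A ⊗[ℂ] V) :
    deltaIdId A V (a ⊗ₜ[ℂ] x) =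
      LinearMap.lTensor A ((TensorProduct.mk ℂ A (A ⊗[ℂ] V)).flip x) (Coalgebra.comul a) := by
  have : deltaIdId A V (a ⊗ₜ[ℂ] x)
      = (Algebra.TensorProduct.assoc ℂ ℂ ℂ A A (A ⊗[ℂ] V)) ((Coalgebra.comul a) ⊗ₜ[ℂ] x) := by
    simp [deltaIdId]
  rw [this, assoc_fix]

lemma comp1 : (emb234 A V).comp (leg23 A V) = emb34 A V := by
  apply AlgHom.toLinearMap_injective
  ext a v
  simp [emb234, leg23, emb34]

lemma comp2 : (emb234 A V).comp (deltaId A V) = (idDeltaId A V).comp (leg23 A V) := by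
  apply AlgHom.toLinearMap_injective
  ext a v
  simp [emb234, deltaId, idDeltaId, leg23]

lemma comp3 : (emb234 A V).comp (leg13 A V) = (emb124 A V).comp (leg23 A V) := by
  apply AlgHom.toLinearMap_injective
  ext a v
  simp [emb234, leg13, emb124, leg23]

lemma comp4 : (idDeltaId A V).comp (leg13 A V) = (emb124 A V).comp (leg13 A V) := by
  apply AlgHom.toLinearMap_injective
  ext a v
  simp [idDeltaId, leg13, emb124, deltaId]
  rw [Algebra.TensorProduct.one_def, TensorProduct.AlgebraTensorModule.assoc_tmul]

lemma comp5 : (deltaIdId A V).comp (leg23 A V) = emb34 A V := by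
  apply AlgHom.toLinearMap_injective
  ext a v
  simp [deltaIdId, leg23, emb34, Algebra.TensorProduct.one_def, Algebra.TensorProduct.assoc_tmul]

lemma comp6 : (emb124 A V).comp (deltaId A V) = (deltaIdId A V).comp (leg13 A V) := by
  apply AlgHom.toLinearMap_injective
  ext a v
  show (emb124 A V) ((deltaId A V) (a ⊗ₜ v)) = (deltaIdId A V) ((leg13 A V) (a ⊗ₜ v))
  have h2 : (leg13 A V) (a ⊗ₜ[ℂ] v) = a ⊗ₜ[ℂ] ((1 : A) ⊗ₜ[ℂ] v) := by simp [leg13]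
  rw [deltaId_apply, h2, deltaIdId_apply]
  generalize Coalgebra.comul (R := ℂ) a = c
  induction c using TensorProduct.induction_on with
  | zero => simp
  | tmul x y => simp [emb124, TensorProduct.mk]
  | add x y hx hy => simp [hx, hy]

lemma comp7 : (idDeltaId A V).comp (deltaId A V) = (deltaIdId A V).comp (deltaId A V) := by
  apply AlgHom.toLinearMap_injective
  ext a v
  show (idDeltaId A V) ((deltaId A V) (a ⊗ₜ v)) = (deltaIdId A V) ((deltaId A V) (a ⊗ₜ v))
  rw [deltaId_apply]
  set H : A ⊗[ℂ] (A ⊗[ℂ] A) →ₗ[ℂ] A ⊗[ℂ] (A ⊗[ℂ] (A ⊗[ℂ] V)) :=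
    LinearMap.lTensor A (LinearMap.lTensor A ((TensorProduct.mk ℂ A V).flip v)) with hH
  have hL : ∀ d : A ⊗[ℂ] A,
      (idDeltaId A V) (LinearMap.lTensor A ((TensorProduct.mk ℂ A V).flip v) d)
        = H ((LinearMap.lTensor A (Coalgebra.comul (R := ℂ))) d) := by
    intro d
    induction d using TensorProduct.induction_on with
    | zero => simp
    | tmul x y =>
      simp only [LinearMap.lTensor_tmul, TensorProduct.mk_apply, LinearMap.flip_apply, hH]
      show (idDeltaId A V) (x ⊗ₜ (y ⊗ₜ v)) = _
      have h3 : (idDeltaId A V) (x ⊗ₜ (y ⊗ₜ v)) = x ⊗ₜ[ℂ] ((deltaId A V) (y ⊗ₜ v)) := by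
        simp [idDeltaId]
      rw [h3, deltaId_apply]
    | add x y hx hy => simp [hx, hy]
  have hR : ∀ d : A ⊗[ℂ] A,
      (deltaIdId A V) (LinearMap.lTensor A ((TensorProduct.mk ℂ A V).flip v) d)
        = H ((TensorProduct.assoc ℂ A A A)
            ((LinearMap.rTensor A (Coalgebra.comul (R := ℂ))) d)) := by
    intro d
    induction d using TensorProduct.induction_on with
    | zero => simp
    | tmul x y =>
      simp only [LinearMap.lTensor_tmul, LinearMap.rTensor_tmul,
        TensorProduct.mk_apply, LinearMap.flip_apply, hH]
      show (deltaIdId A V) (x ⊗ₜ (y ⊗ₜ v)) = _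
      rw [deltaIdId_apply, assoc_fix']
      generalize Coalgebra.comul (R := ℂ) x = e
      induction e using TensorProduct.induction_on with
      | zero => simp
      | tmul p q => simp [TensorProduct.mk]
      | add p q hp hq => simp [hp, hq]
    | add x y hx hy => simp [hx, hy]
  rw [hL, hR, Coalgebra.coassoc_apply]

set_option maxHeartbeats 1600000 in
/-- the generalized pentagon identity
`(1 ⊗ F) · (id_A ⊗ Δ ⊗ id_V)(F) = Φ₃ · F₁₂ · Φ₃⁻¹ · (Δ ⊗ id_A ⊗ id_V)(F)`
in `A ⊗ A ⊗ A ⊗ V`. -/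
theorem generalized_pentagon (Φ : (A ⊗[ℂ] V)ˣ) :
    uMap (emb234 A V) (fusion A V Φ) * uMap (idDeltaId A V) (fusion A V Φ) =
      uMap (emb34 A V) Φ * uMap (emb124 A V) (fusion A V Φ) * (uMap (emb34 A V) Φ)⁻¹ *
        uMap (deltaIdId A V) (fusion A V Φ) := by
  simp only [fusion, map_mul, map_inv, uMap_uMap]
  rw [comp1, comp2, comp3, comp4, comp5, comp6, comp7]
  group

end Stmt0
end
end

section
/- Quasitriangularity of the R-matrix of Z_q: The element R := Σ_{t,s ∈ ZMod p} q^{t·s} • (P^t ⊗ P^s) ∈ A ⊗ A is invertible, with inverse Σ_{t,s} (q^{t·s})⁻¹ • (P^t ⊗ P^s), and satisfies the quasitriangularity identities (Δ ⊗ id)(R) = R₁₃ · R₂₃ and (id ⊗ Δ)(R) = R₁₃ · R₁₂ in A ⊗ A ⊗ A, where R₁₃, R₂₃, R₁₂ denote the images of R under the canonical unital algebra embeddings into the indicated tensor factors (the intertwining relation R · Δ(x) = Δᵒᵖ(x) · R holds automatically since A is commutative and cocommutative). -/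
open Finset

set_option linter.unusedSectionVars false
set_option maxHeartbeats 1000000
set_option synthInstance.maxHeartbeats 1000000


open scoped TensorProduct

noncomputable section

namespace Stmt12

variable (p : ℕ) [NeZero p] (q : ℂ)

/-- The group Hopf algebra of `ℤ/pℤ` over `ℂ` (the modular Hopf algebra `Z_q`). -/
abbrev Aq := AddMonoidAlgebra ℂ (ZMod p)

/-- The basis element `h^m` of `Z_q`. -/
def hgen (m : ZMod p) : Aq p := AddMonoidAlgebra.single m 1

/-- The characteristic projector `P^t = p⁻¹ Σ_m q^{-tm} h^m`. -/
def Pproj (t : ZMod p) : Aq p :=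
  (p : ℂ)⁻¹ • ∑ m : ZMod p, (q ^ (t.val * m.val))⁻¹ • hgen p m

/-- The `R`-matrix `R = Σ_{t,s} q^{ts} P^t ⊗ P^s` of `Z_q`. -/
def Rmat : Aq p ⊗[ℂ] Aq p :=
  ∑ t : ZMod p, ∑ s : ZMod p, q ^ (t.val * s.val) • (Pproj p q t ⊗ₜ[ℂ] Pproj p q s)

/-- Embedding of `A ⊗ A` into `A ⊗ A ⊗ A` with legs in positions 1 and 2. -/
def a12 : Aq p ⊗[ℂ] Aq p →ₐ[ℂ] Aq p ⊗[ℂ] (Aq p ⊗[ℂ] Aq p) :=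
  Algebra.TensorProduct.map (AlgHom.id ℂ (Aq p)) Algebra.TensorProduct.includeLeft

/-- Embedding of `A ⊗ A` into `A ⊗ A ⊗ A` with legs in positions 1 and 3. -/
def a13 : Aq p ⊗[ℂ] Aq p →ₐ[ℂ] Aq p ⊗[ℂ] (Aq p ⊗[ℂ] Aq p) :=
  Algebra.TensorProduct.map (AlgHom.id ℂ (Aq p)) Algebra.TensorProduct.includeRight

/-- Embedding of `A ⊗ A` into `A ⊗ A ⊗ A` with legs in positions 2 and 3. -/
def a23 : Aq p ⊗[ℂ] Aq p →ₐ[ℂ] Aq p ⊗[ℂ] (Aq p ⊗[ℂ] Aq p) :=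
  Algebra.TensorProduct.includeRight

variable {p q}

lemma hgen_mul (m n : ZMod p) : hgen p m * hgen p n = hgen p (m + n) := by
  simp [hgen, AddMonoidAlgebra.single_mul_single]

lemma hgen_zero : hgen p 0 = (1 : Aq p) := rfl

lemma sum_smul_mul (c d : ZMod p → ℂ) :
    (∑ m : ZMod p, c m • hgen p m) * (∑ n : ZMod p, d n • hgen p n)
      = ∑ k : ZMod p, (∑ m : ZMod p, c m * d (k - m)) • hgen p k := by
  rw [Finset.sum_mul_sum]
  have h1 : ∀ m n : ZMod p,
      (c m • hgen p m) * (d n • hgen p n) = (c m * d n) • hgen p (m + n) := by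
    intro m n; rw [smul_mul_assoc, mul_smul_comm, smul_smul, hgen_mul]
  simp_rw [h1]
  have h2 : ∀ m : ZMod p, ∑ n : ZMod p, (c m * d n) • hgen p (m + n)
      = ∑ k : ZMod p, (c m * d (k - m)) • hgen p k := by
    intro m
    refine Fintype.sum_equiv (Equiv.addLeft m) _ _ ?_
    intro n
    simp
  simp_rw [h2]
  rw [Finset.sum_comm]
  simp_rw [Finset.sum_smul]

/-- the character -/
def e (q : ℂ) {p : ℕ} (t : ZMod p) : ℂ := q ^ t.val

lemma hp0 : (p : ℂ) ≠ 0 := Nat.cast_ne_zero.mpr (NeZero.ne p)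

section prim
variable (hq : IsPrimitiveRoot q p)
include hq

lemma qpow_congr {a b : ℕ} (h : a % p = b % p) : q ^ a = q ^ b := by
  conv_lhs => rw [← Nat.div_add_mod a p]
  conv_rhs => rw [← Nat.div_add_mod b p]
  rw [h, pow_add, pow_add, pow_mul, pow_mul, hq.pow_eq_one, one_pow, one_pow]

lemma e_pow (t m : ZMod p) : q ^ (t.val * m.val) = e q (t * m) := by
  refine (qpow_congr hq ?_).symm
  rw [ZMod.val_mul, Nat.mod_mod]

lemma e_add (a b : ZMod p) : e q (a + b) = e q a * e q b := by
  rw [e, e, e, ← pow_add]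
  refine qpow_congr hq ?_
  rw [ZMod.val_add, Nat.mod_mod]

lemma e_zero : e q (0 : ZMod p) = 1 := by
  rw [e, ZMod.val_zero, pow_zero]

lemma e_mul_neg (a : ZMod p) : e q a * e q (-a) = 1 := by
  rw [← e_add hq, add_neg_cancel, e_zero hq]

lemma e_inv (a : ZMod p) : (e q a)⁻¹ = e q (-a) :=
  inv_eq_of_mul_eq_one_right (e_mul_neg hq a)

lemma e_sum (k : ZMod p) : ∑ t : ZMod p, e q (t * k) = if k = 0 then (p : ℂ) else 0 := by
  have key : ∀ t : ZMod p, e q (t * k) = (q ^ k.val) ^ t.val := by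
    intro t
    rw [← e_pow hq, mul_comm, pow_mul]
  rw [Finset.sum_congr rfl fun t _ => key t]
  have : ∑ t : ZMod p, (q ^ k.val) ^ t.val = ∑ i ∈ range p, (q ^ k.val) ^ i := by
    refine Finset.sum_nbij' (fun t => t.val) (fun i => (i : ZMod p)) ?_ ?_ ?_ ?_ ?_
    · intro t _; exact Finset.mem_range.mpr (ZMod.val_lt t)
    · intro i _; exact Finset.mem_univ _
    · intro t _; exact ZMod.natCast_rightInverse t
    · intro i hi; exact ZMod.val_natCast_of_lt (Finset.mem_range.mp hi)
    · intro t _; rfl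
  rw [this]
  by_cases hk : k = 0
  · simp [hk]
  · rw [if_neg hk]
    have h1 : q ^ k.val ≠ 1 :=
      hq.pow_ne_one_of_pos_of_lt (ZMod.val_pos.mpr hk).ne' (ZMod.val_lt k)
    rw [geom_sum_eq h1, ← pow_mul, mul_comm, pow_mul, hq.pow_eq_one, one_pow,
      sub_self, zero_div]

lemma P_eq (t : ZMod p) :
    Pproj p q t = (p : ℂ)⁻¹ • ∑ m : ZMod p, e q (-(t * m)) • hgen p m := by
  rw [Pproj]
  congr 1
  refine Finset.sum_congr rfl fun m _ => ?_
  rw [e_pow hq, e_inv hq]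

lemma P_mul (t s : ZMod p) :
    Pproj p q t * Pproj p q s = if t = s then Pproj p q t else 0 := by
  rw [P_eq hq t, P_eq hq s, smul_mul_assoc, mul_smul_comm, smul_smul, sum_smul_mul]
  have hc : ∀ k : ZMod p, (∑ m : ZMod p, e q (-(t * m)) * e q (-(s * (k - m))))
      = if t = s then (p : ℂ) * e q (-(t * k)) else 0 := by
    intro k
    have h1 : ∀ m : ZMod p, e q (-(t * m)) * e q (-(s * (k - m)))
        = e q (m * (s - t)) * e q (-(s * k)) := by
      intro m
      rw [← e_add hq, ← e_add hq]
      congr 1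
      ring
    rw [Finset.sum_congr rfl fun m _ => h1 m, ← Finset.sum_mul, e_sum hq]
    by_cases hts : t = s
    · subst hts
      rw [if_pos (sub_self t), if_pos rfl, mul_comm]
    · rw [if_neg (sub_ne_zero_of_ne fun h => hts h.symm), if_neg hts, zero_mul]
  rw [Finset.sum_congr rfl fun k _ => by rw [hc k]]
  by_cases hts : t = s
  · subst hts
    simp only [eq_self_iff_true, if_true]
    rw [Finset.smul_sum, Finset.smul_sum]
    refine Finset.sum_congr rfl fun k _ => ?_
    rw [smul_smul, smul_smul]
    congr 1
    calc ((p:ℂ)⁻¹ * (p:ℂ)⁻¹) * ((p:ℂ) * e q (-(t * k)))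
        = (p:ℂ)⁻¹ * e q (-(t * k)) * ((p:ℂ)⁻¹ * (p:ℂ)) := by ring
      _ = (p:ℂ)⁻¹ * e q (-(t * k)) := by rw [inv_mul_cancel₀ hp0, mul_one]
  · rw [if_neg hts]
    simp [hts]

lemma P_sum : ∑ t : ZMod p, Pproj p q t = 1 := by
  rw [Finset.sum_congr rfl fun t _ => P_eq hq t, ← Finset.smul_sum, Finset.sum_comm]
  have h1 : ∀ m : ZMod p, ∑ t : ZMod p, e q (-(t * m)) • hgen p m
      = (if m = 0 then (p : ℂ) else 0) • hgen p m := by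
    intro m
    rw [← Finset.sum_smul]
    congr 1
    have h3 : ∑ t : ZMod p, e q (-(t * m)) = ∑ t : ZMod p, e q (t * -m) :=
      Finset.sum_congr rfl fun t _ => by rw [mul_neg]
    rw [h3, e_sum hq (-m)]
    simp [neg_eq_zero]
  rw [Finset.sum_congr rfl fun m _ => h1 m]
  simp only [ite_smul, zero_smul]
  rw [Finset.sum_ite_eq' Finset.univ (0 : ZMod p) (fun m => (p : ℂ) • hgen p m),
    if_pos (Finset.mem_univ _), smul_smul, inv_mul_cancel₀ hp0, one_smul, hgen_zero]

lemma P_delta (Δ : Aq p →ₐ[ℂ] Aq p ⊗[ℂ] Aq p)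
    (hΔ : ∀ m : ZMod p, Δ (hgen p m) = hgen p m ⊗ₜ[ℂ] hgen p m) (t : ZMod p) :
    Δ (Pproj p q t) = ∑ a : ZMod p, Pproj p q a ⊗ₜ[ℂ] Pproj p q (t - a) := by
  have L : Δ (Pproj p q t)
      = (p:ℂ)⁻¹ • ∑ m : ZMod p, e q (-(t * m)) • (hgen p m ⊗ₜ[ℂ] hgen p m) := by
    rw [P_eq hq, map_smul, map_sum]
    congr 1
    refine Finset.sum_congr rfl fun m _ => ?_
    rw [map_smul, hΔ]
  have Rk : ∀ a : ZMod p, Pproj p q a ⊗ₜ[ℂ] Pproj p q (t - a)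
      = ((p:ℂ)⁻¹ * (p:ℂ)⁻¹) • ∑ m : ZMod p, ∑ n : ZMod p,
          (e q (-(a * m)) * e q (-((t - a) * n))) • (hgen p m ⊗ₜ[ℂ] hgen p n) := by
    intro a
    rw [P_eq hq a, P_eq hq (t - a)]
    simp only [TensorProduct.smul_tmul', TensorProduct.tmul_smul, smul_smul,
      TensorProduct.sum_tmul, TensorProduct.tmul_sum, Finset.smul_sum]
    rw [Finset.sum_comm]
    refine Finset.sum_congr rfl fun m _ => Finset.sum_congr rfl fun n _ => ?_
    congr 2
    ring
  have hc : ∀ m n : ZMod p, (∑ a : ZMod p, e q (-(a * m)) * e q (-((t - a) * n)))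
      = if n = m then (p : ℂ) * e q (-(t * n)) else 0 := by
    intro m n
    have h1 : ∀ a : ZMod p, e q (-(a * m)) * e q (-((t - a) * n))
        = e q (a * (n - m)) * e q (-(t * n)) := by
      intro a
      rw [← e_add hq, ← e_add hq]
      congr 1
      ring
    rw [Finset.sum_congr rfl fun a _ => h1 a, ← Finset.sum_mul, e_sum hq]
    by_cases hnm : n = m
    · rw [if_pos (sub_eq_zero_of_eq hnm), if_pos hnm, mul_comm]
    · rw [if_neg (sub_ne_zero_of_ne hnm), if_neg hnm, zero_mul]
  rw [L, Finset.sum_congr rfl fun a _ => Rk a, ← Finset.smul_sum]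
  conv_rhs =>
    rw [Finset.sum_comm]
    enter [2, 2, m]
    rw [Finset.sum_comm]
    enter [2, n]
    rw [← Finset.sum_smul]
  simp only [hc, ite_smul, zero_smul]
  simp only [Finset.sum_ite_eq', Finset.mem_univ, if_true]
  rw [Finset.smul_sum, Finset.smul_sum]
  refine Finset.sum_congr rfl fun m _ => ?_
  rw [smul_smul, smul_smul]
  congr 1
  symm
  calc ((p:ℂ)⁻¹ * (p:ℂ)⁻¹) * ((p:ℂ) * e q (-(t * m)))
      = (p:ℂ)⁻¹ * e q (-(t * m)) * ((p:ℂ)⁻¹ * (p:ℂ)) := by ring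
    _ = (p:ℂ)⁻¹ * e q (-(t * m)) := by rw [inv_mul_cancel₀ hp0, mul_one]

lemma Bmul (c d : ZMod p → ℂ) :
    (∑ s : ZMod p, c s • Pproj p q s) * (∑ s : ZMod p, d s • Pproj p q s)
      = ∑ s : ZMod p, (c s * d s) • Pproj p q s := by
  rw [Finset.sum_mul_sum]
  have h : ∀ s s' : ZMod p, (c s • Pproj p q s) * (d s' • Pproj p q s')
      = if s = s' then (c s * d s') • Pproj p q s else 0 := by
    intro s s'
    rw [smul_mul_assoc, mul_smul_comm, smul_smul, P_mul hq]
    by_cases h : s = s' <;> simp [h]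
  simp_rw [h]
  simp [Finset.sum_ite_eq]

lemma PPmul {B : Type} [Semiring B] [Algebra ℂ B] (x y : ZMod p → B) :
    (∑ t : ZMod p, Pproj p q t ⊗ₜ[ℂ] x t) * (∑ t : ZMod p, Pproj p q t ⊗ₜ[ℂ] y t)
      = ∑ t : ZMod p, Pproj p q t ⊗ₜ[ℂ] (x t * y t) := by
  rw [Finset.sum_mul_sum]
  have h : ∀ t t' : ZMod p, (Pproj p q t ⊗ₜ[ℂ] x t) * (Pproj p q t' ⊗ₜ[ℂ] y t')
      = if t = t' then Pproj p q t ⊗ₜ[ℂ] (x t * y t') else 0 := by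
    intro t t'
    rw [Algebra.TensorProduct.tmul_mul_tmul, P_mul hq]
    by_cases h : t = t' <;> simp [h, TensorProduct.ite_tmul]
  simp_rw [h]
  simp [Finset.sum_ite_eq]

end prim

lemma hRform {B : Type} [AddCommMonoid B] [Module ℂ B] (f : ZMod p → ZMod p → ℂ)
    (v : ZMod p → B) :
    (∑ t : ZMod p, ∑ s : ZMod p, f t s • (Pproj p q t ⊗ₜ[ℂ] v s))
      = ∑ t : ZMod p, Pproj p q t ⊗ₜ[ℂ] (∑ s : ZMod p, f t s • v s) := by
  refine Finset.sum_congr rfl fun t _ => ?_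
  rw [TensorProduct.tmul_sum]
  exact Finset.sum_congr rfl fun s _ => (TensorProduct.tmul_smul _ _ _).symm

lemma sum_mul_sum'' {D : Type} [NonUnitalNonAssocSemiring D] (f g : ZMod p → D) :
    (∑ t : ZMod p, f t) * (∑ t : ZMod p, g t)
      = ∑ t : ZMod p, ∑ t' : ZMod p, f t * g t' :=
  Fintype.sum_mul_sum f g

variable (p q)

/-- the `R`-matrix of `Z_q` is invertible and quasitriangular:
`(Δ ⊗ id)(R) = R₁₃ · R₂₃` and `(id ⊗ Δ)(R) = R₁₃ · R₁₂`. -/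
theorem R_quasitriangular (hq : IsPrimitiveRoot q p)
    (Δ : Aq p →ₐ[ℂ] Aq p ⊗[ℂ] Aq p)
    (hΔ : ∀ m : ZMod p, Δ (hgen p m) = hgen p m ⊗ₜ[ℂ] hgen p m) :
    (Rmat p q *
        (∑ t : ZMod p, ∑ s : ZMod p,
          (q ^ (t.val * s.val))⁻¹ • (Pproj p q t ⊗ₜ[ℂ] Pproj p q s)) = 1) ∧
      ((∑ t : ZMod p, ∑ s : ZMod p,
          (q ^ (t.val * s.val))⁻¹ • (Pproj p q t ⊗ₜ[ℂ] Pproj p q s)) * Rmat p q = 1) ∧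
      ((Algebra.TensorProduct.assoc ℂ ℂ ℂ (Aq p) (Aq p) (Aq p)).toAlgHom.comp
          (Algebra.TensorProduct.map Δ (AlgHom.id ℂ (Aq p))) (Rmat p q) =
        a13 p (Rmat p q) * a23 p (Rmat p q)) ∧
      (Algebra.TensorProduct.map (AlgHom.id ℂ (Aq p)) Δ (Rmat p q) =
        a13 p (Rmat p q) * a12 p (Rmat p q)) := by
  have hq0 : q ≠ 0 := hq.ne_zero (NeZero.ne p)
  have hRn : Rmat p q = ∑ t : ZMod p,
      Pproj p q t ⊗ₜ[ℂ] (∑ s : ZMod p, q ^ (t.val * s.val) • Pproj p q s) := by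
    rw [Rmat]; exact hRform _ _
  have hRn' : (∑ t : ZMod p, ∑ s : ZMod p,
        (q ^ (t.val * s.val))⁻¹ • (Pproj p q t ⊗ₜ[ℂ] Pproj p q s))
      = ∑ t : ZMod p,
          Pproj p q t ⊗ₜ[ℂ] (∑ s : ZMod p, (q ^ (t.val * s.val))⁻¹ • Pproj p q s) :=
    hRform _ _
  refine ⟨?_, ?_, ?_, ?_⟩
  · rw [hRn, hRn', PPmul hq]
    have h1 : ∀ t : ZMod p, (∑ s : ZMod p, q ^ (t.val * s.val) • Pproj p q s) *
        (∑ s : ZMod p, (q ^ (t.val * s.val))⁻¹ • Pproj p q s) = 1 := by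
      intro t
      rw [Bmul hq]
      rw [Finset.sum_congr rfl fun s _ =>
        by rw [mul_inv_cancel₀ (pow_ne_zero _ hq0), one_smul]]
      exact P_sum hq
    rw [Finset.sum_congr rfl fun t _ => by rw [h1 t]]
    rw [← TensorProduct.sum_tmul, P_sum hq, Algebra.TensorProduct.one_def]
  · rw [hRn, hRn', PPmul hq]
    have h1 : ∀ t : ZMod p, (∑ s : ZMod p, (q ^ (t.val * s.val))⁻¹ • Pproj p q s) *
        (∑ s : ZMod p, q ^ (t.val * s.val) • Pproj p q s) = 1 := by
      intro t
      rw [Bmul hq]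
      rw [Finset.sum_congr rfl fun s _ =>
        by rw [inv_mul_cancel₀ (pow_ne_zero _ hq0), one_smul]]
      exact P_sum hq
    rw [Finset.sum_congr rfl fun t _ => by rw [h1 t]]
    rw [← TensorProduct.sum_tmul, P_sum hq, Algebra.TensorProduct.one_def]
  · -- part 3
    have hL : (Algebra.TensorProduct.assoc ℂ ℂ ℂ (Aq p) (Aq p) (Aq p)).toAlgHom.comp
        (Algebra.TensorProduct.map Δ (AlgHom.id ℂ (Aq p))) (Rmat p q)
        = ∑ t : ZMod p, ∑ s : ZMod p, ∑ a : ZMod p, q ^ (t.val * s.val) •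
            (Pproj p q a ⊗ₜ[ℂ] (Pproj p q (t - a) ⊗ₜ[ℂ] Pproj p q s)) := by
      rw [Rmat]
      simp only [map_sum, map_smul, AlgHom.coe_comp, Function.comp_apply,
        Algebra.TensorProduct.map_tmul, AlgHom.coe_id, id_eq, P_delta hq Δ hΔ,
        TensorProduct.sum_tmul, Algebra.TensorProduct.assoc_tmul, Finset.smul_sum,
        AlgEquiv.toAlgHom_eq_coe, AlgHom.coe_coe, AlgEquiv.coe_algHom]
    have h13 : a13 p (Rmat p q) = ∑ t : ZMod p, Pproj p q t ⊗ₜ[ℂ]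
        ((1 : Aq p) ⊗ₜ[ℂ] (∑ s : ZMod p, q ^ (t.val * s.val) • Pproj p q s)) := by
      rw [hRn, a13, map_sum]
      simp only [Algebra.TensorProduct.map_tmul, AlgHom.coe_id, id_eq,
        Algebra.TensorProduct.includeRight_apply]
    have h23 : a23 p (Rmat p q) = ∑ t : ZMod p, (1 : Aq p) ⊗ₜ[ℂ]
        (Pproj p q t ⊗ₜ[ℂ] (∑ s : ZMod p, q ^ (t.val * s.val) • Pproj p q s)) := by
      rw [hRn, a23, map_sum]
      simp only [Algebra.TensorProduct.includeRight_apply]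
    have hprod : ∀ t t' : ZMod p,
        (Pproj p q t ⊗ₜ[ℂ] ((1 : Aq p) ⊗ₜ[ℂ]
            (∑ s : ZMod p, q ^ (t.val * s.val) • Pproj p q s))) *
          ((1 : Aq p) ⊗ₜ[ℂ] (Pproj p q t' ⊗ₜ[ℂ]
            (∑ s : ZMod p, q ^ (t'.val * s.val) • Pproj p q s)))
        = Pproj p q t ⊗ₜ[ℂ] (Pproj p q t' ⊗ₜ[ℂ]
            (∑ s : ZMod p, (q ^ (t.val * s.val) * q ^ (t'.val * s.val)) • Pproj p q s)) := by
      intro t t'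
      rw [Algebra.TensorProduct.tmul_mul_tmul, Algebra.TensorProduct.tmul_mul_tmul,
        mul_one, one_mul, Bmul hq]
    rw [hL, h13, h23]
    refine Eq.trans ?_ (Eq.trans (sum_mul_sum'' _ _)
      (Finset.sum_congr rfl fun t _ => Finset.sum_congr rfl fun t' _ => hprod t t')).symm
    calc (∑ t : ZMod p, ∑ s : ZMod p, ∑ a : ZMod p, q ^ (t.val * s.val) •
            (Pproj p q a ⊗ₜ[ℂ] (Pproj p q (t - a) ⊗ₜ[ℂ] Pproj p q s)))
        = ∑ t : ZMod p, ∑ a : ZMod p, ∑ s : ZMod p, q ^ (t.val * s.val) •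
            (Pproj p q a ⊗ₜ[ℂ] (Pproj p q (t - a) ⊗ₜ[ℂ] Pproj p q s)) :=
          Finset.sum_congr rfl fun t _ => Finset.sum_comm
      _ = ∑ a : ZMod p, ∑ t : ZMod p, ∑ s : ZMod p, q ^ (t.val * s.val) •
            (Pproj p q a ⊗ₜ[ℂ] (Pproj p q (t - a) ⊗ₜ[ℂ] Pproj p q s)) := Finset.sum_comm
      _ = ∑ a : ZMod p, ∑ b : ZMod p, ∑ s : ZMod p, q ^ ((a + b).val * s.val) •
            (Pproj p q a ⊗ₜ[ℂ] (Pproj p q (a + b - a) ⊗ₜ[ℂ] Pproj p q s)) :=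
          Finset.sum_congr rfl fun a _ =>
            (Fintype.sum_equiv (Equiv.addLeft a) _ _ fun b => rfl).symm
      _ = ∑ a : ZMod p, ∑ b : ZMod p, Pproj p q a ⊗ₜ[ℂ] (Pproj p q b ⊗ₜ[ℂ]
            (∑ s : ZMod p, (q ^ (a.val * s.val) * q ^ (b.val * s.val)) • Pproj p q s)) := by
          refine Finset.sum_congr rfl fun a _ => Finset.sum_congr rfl fun b _ => ?_
          rw [add_sub_cancel_left, TensorProduct.tmul_sum, TensorProduct.tmul_sum]
          refine Finset.sum_congr rfl fun s _ => ?_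
          rw [← TensorProduct.tmul_smul, ← TensorProduct.tmul_smul]
          congr 2
          rw [e_pow hq, e_pow hq, e_pow hq, add_mul, e_add hq]
  · -- part 4
    have hL : Algebra.TensorProduct.map (AlgHom.id ℂ (Aq p)) Δ (Rmat p q)
        = ∑ t : ZMod p, ∑ s : ZMod p, ∑ a : ZMod p, q ^ (t.val * s.val) •
            (Pproj p q t ⊗ₜ[ℂ] (Pproj p q a ⊗ₜ[ℂ] Pproj p q (s - a))) := by
      rw [Rmat]
      simp only [map_sum, map_smul, Algebra.TensorProduct.map_tmul, AlgHom.coe_id,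
        id_eq, P_delta hq Δ hΔ, TensorProduct.tmul_sum, Finset.smul_sum]
    have h13 : a13 p (Rmat p q) = ∑ t : ZMod p, Pproj p q t ⊗ₜ[ℂ]
        ((1 : Aq p) ⊗ₜ[ℂ] (∑ s : ZMod p, q ^ (t.val * s.val) • Pproj p q s)) := by
      rw [hRn, a13, map_sum]
      simp only [Algebra.TensorProduct.map_tmul, AlgHom.coe_id, id_eq,
        Algebra.TensorProduct.includeRight_apply]
    have h12 : a12 p (Rmat p q) = ∑ t : ZMod p, Pproj p q t ⊗ₜ[ℂ]
        ((∑ s : ZMod p, q ^ (t.val * s.val) • Pproj p q s) ⊗ₜ[ℂ] (1 : Aq p)) := by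
      rw [hRn, a12, map_sum]
      simp only [Algebra.TensorProduct.map_tmul, AlgHom.coe_id, id_eq,
        Algebra.TensorProduct.includeLeft_apply]
    have hprod : ∀ t t' : ZMod p,
        (Pproj p q t ⊗ₜ[ℂ] ((1 : Aq p) ⊗ₜ[ℂ]
            (∑ s : ZMod p, q ^ (t.val * s.val) • Pproj p q s))) *
          (Pproj p q t' ⊗ₜ[ℂ] ((∑ s : ZMod p, q ^ (t'.val * s.val) • Pproj p q s) ⊗ₜ[ℂ]
            (1 : Aq p)))
        = if t = t' then Pproj p q t ⊗ₜ[ℂ]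
            ((∑ s : ZMod p, q ^ (t'.val * s.val) • Pproj p q s) ⊗ₜ[ℂ]
             (∑ s : ZMod p, q ^ (t.val * s.val) • Pproj p q s)) else 0 := by
      intro t t'
      rw [Algebra.TensorProduct.tmul_mul_tmul, Algebra.TensorProduct.tmul_mul_tmul,
        mul_one, one_mul, P_mul hq]
      by_cases h : t = t' <;> simp [h, TensorProduct.ite_tmul]
    have hCC : ∀ t : ZMod p,
        (∑ s : ZMod p, q ^ (t.val * s.val) • Pproj p q s) ⊗ₜ[ℂ]
          (∑ s : ZMod p, q ^ (t.val * s.val) • Pproj p q s)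
        = ∑ a : ZMod p, ∑ b : ZMod p,
            (q ^ (t.val * a.val) * q ^ (t.val * b.val)) • (Pproj p q a ⊗ₜ[ℂ] Pproj p q b) := by
      intro t
      rw [TensorProduct.sum_tmul]
      refine Finset.sum_congr rfl fun a _ => ?_
      rw [TensorProduct.tmul_sum]
      refine Finset.sum_congr rfl fun b _ => ?_
      rw [TensorProduct.tmul_smul, TensorProduct.smul_tmul', smul_smul,
        mul_comm (q ^ (t.val * b.val)) (q ^ (t.val * a.val))]
      exact TensorProduct.smul_tmul' _ _ _
    rw [hL, h13, h12]
    refine Eq.trans ?_ (Eq.trans (sum_mul_sum'' _ _)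
      (Finset.sum_congr rfl fun t _ => Finset.sum_congr rfl fun t' _ => hprod t t')).symm
    have hcollapse : (∑ t : ZMod p, ∑ t' : ZMod p, if t = t' then Pproj p q t ⊗ₜ[ℂ]
            ((∑ s : ZMod p, q ^ (t'.val * s.val) • Pproj p q s) ⊗ₜ[ℂ]
             (∑ s : ZMod p, q ^ (t.val * s.val) • Pproj p q s)) else 0)
        = ∑ t : ZMod p, Pproj p q t ⊗ₜ[ℂ]
            ((∑ s : ZMod p, q ^ (t.val * s.val) • Pproj p q s) ⊗ₜ[ℂ]
             (∑ s : ZMod p, q ^ (t.val * s.val) • Pproj p q s)) := by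
      refine Finset.sum_congr rfl fun t _ => ?_
      rw [Finset.sum_ite_eq, if_pos (Finset.mem_univ t)]
    rw [hcollapse]
    calc (∑ t : ZMod p, ∑ s : ZMod p, ∑ a : ZMod p, q ^ (t.val * s.val) •
            (Pproj p q t ⊗ₜ[ℂ] (Pproj p q a ⊗ₜ[ℂ] Pproj p q (s - a))))
        = ∑ t : ZMod p, ∑ a : ZMod p, ∑ s : ZMod p, q ^ (t.val * s.val) •
            (Pproj p q t ⊗ₜ[ℂ] (Pproj p q a ⊗ₜ[ℂ] Pproj p q (s - a))) :=
          Finset.sum_congr rfl fun t _ => Finset.sum_comm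
      _ = ∑ t : ZMod p, ∑ a : ZMod p, ∑ b : ZMod p, q ^ (t.val * (a + b).val) •
            (Pproj p q t ⊗ₜ[ℂ] (Pproj p q a ⊗ₜ[ℂ] Pproj p q (a + b - a))) :=
          Finset.sum_congr rfl fun t _ => Finset.sum_congr rfl fun a _ =>
            (Fintype.sum_equiv (Equiv.addLeft a) _ _ fun b => rfl).symm
      _ = ∑ t : ZMod p, Pproj p q t ⊗ₜ[ℂ] (∑ a : ZMod p, ∑ b : ZMod p,
            (q ^ (t.val * a.val) * q ^ (t.val * b.val)) •
              (Pproj p q a ⊗ₜ[ℂ] Pproj p q b)) := by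
          refine Finset.sum_congr rfl fun t _ => ?_
          rw [TensorProduct.tmul_sum]
          refine Finset.sum_congr rfl fun a _ => ?_
          rw [TensorProduct.tmul_sum]
          refine Finset.sum_congr rfl fun b _ => ?_
          rw [add_sub_cancel_left, ← TensorProduct.tmul_smul]
          congr 2
          rw [e_pow hq, e_pow hq, e_pow hq, mul_add, e_add hq]
      _ = ∑ t : ZMod p, Pproj p q t ⊗ₜ[ℂ]
            ((∑ s : ZMod p, q ^ (t.val * s.val) • Pproj p q s) ⊗ₜ[ℂ]
             (∑ s : ZMod p, q ^ (t.val * s.val) • Pproj p q s)) :=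
          Finset.sum_congr rfl fun t _ => by rw [hCC t]


end Stmt12
end
end

section
/- Ribbon element of Z_q: The element v := Σ_{t ∈ ZMod p} (q^{t·t})⁻¹ • P^t ∈ A is invertible (with inverse Σ_t q^{t·t} • P^t), and with R := Σ_{t,s} q^{t·s} • (P^t ⊗ P^s) it satisfies the ribbon relations R · R = (v ⊗ v) · Δ(v)⁻¹ (note that the flip of R equals R), S(v) = v, and ε(v) = 1. -/
/-!
The `P^t` form a complete family of orthogonal idempotents (Fourier inversion for the primitive
additive character `ψ m = q ^ m.val` of `ZMod p`), so elements `∑ t, f t • P^t` multiply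
pointwise in `f`, and so do the elements `∑ x, f x • (P^{x.1} ⊗ P^{x.2})` of `A ⊗ A`.
As `Δ P^t = ∑_{a+b=t} P^a ⊗ P^b`, `S P^t = P^{-t}` and `ε P^t = δ_{t,0}`, each identity
reduces to one between coefficients; for the ribbon relation it is
`ψ (ab) ^ 2 = ψ (-a²) ψ (-b²) ψ ((a + b)²)`.
-/

open scoped TensorProduct

noncomputable section

namespace Stmt13

variable (p : ℕ) [NeZero p] (q : ℂ)

/-- The group Hopf algebra of `ℤ/pℤ` over `ℂ` (the modular Hopf algebra `Z_q`). -/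
abbrev Aq := AddMonoidAlgebra ℂ (ZMod p)

/-- The basis element `h^m` of `Z_q`. -/
def hgen (m : ZMod p) : Aq p := AddMonoidAlgebra.single m 1

/-- The characteristic projector `P^t = p⁻¹ Σ_m q^{-tm} h^m`. -/
def Pproj (t : ZMod p) : Aq p :=
  (p : ℂ)⁻¹ • ∑ m : ZMod p, (q ^ (t.val * m.val))⁻¹ • hgen p m

/-- The `R`-matrix `R = Σ_{t,s} q^{ts} P^t ⊗ P^s` of `Z_q`. -/
def Rmat : Aq p ⊗[ℂ] Aq p :=
  ∑ t : ZMod p, ∑ s : ZMod p, q ^ (t.val * s.val) • (Pproj p q t ⊗ₜ[ℂ] Pproj p q s)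
/-- The ribbon element `v = Σ_t q^{-t²} P^t` of `Z_q`. -/
def vrib : Aq p :=
  ∑ t : ZMod p, (q ^ (t.val * t.val))⁻¹ • Pproj p q t

section Idempotents

variable {K A B ι κ : Type*} [CommSemiring K] [Semiring A] [Algebra K A] [Semiring B]
  [Algebra K B] [Fintype ι] [Fintype κ] {e : ι → A} {e' : κ → B}

theorem _root_.OrthogonalIdempotents.sum_smul_mul_sum_smul (he : OrthogonalIdempotents e)
    (f g : ι → K) : (∑ i, f i • e i) * ∑ i, g i • e i = ∑ i, (f i * g i) • e i := by
  classical
  simp only [Finset.sum_mul_sum, smul_mul_smul_comm, he.mul_eq, smul_ite, smul_zero,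
    Finset.sum_ite_eq, Finset.mem_univ, if_true]

theorem _root_.CompleteOrthogonalIdempotents.sum_smul_mul_sum_smul_eq_one
    (he : CompleteOrthogonalIdempotents e) {f g : ι → K} (hfg : ∀ i, f i * g i = 1) :
    (∑ i, f i • e i) * ∑ i, g i • e i = 1 := by
  simp only [he.sum_smul_mul_sum_smul, hfg, one_smul, he.complete]

theorem _root_.CompleteOrthogonalIdempotents.ringInverse_sum_smul
    (he : CompleteOrthogonalIdempotents e) {f g : ι → K} (hfg : ∀ i, f i * g i = 1) :
    Ring.inverse (∑ i, f i • e i) = ∑ i, g i • e i :=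
  Ring.inverse_unit ⟨_, _, he.sum_smul_mul_sum_smul_eq_one hfg,
    he.sum_smul_mul_sum_smul_eq_one fun i ↦ by rw [mul_comm, hfg]⟩

theorem _root_.TensorProduct.sum_smul_tmul_sum_smul (e : ι → A) (e' : κ → B) (f : ι → K)
    (g : κ → K) :
    (∑ i, f i • e i) ⊗ₜ[K] (∑ j, g j • e' j) =
      ∑ x : ι × κ, (f x.1 * g x.2) • (e x.1 ⊗ₜ[K] e' x.2) := by
  rw [TensorProduct.sum_tmul, Fintype.sum_prod_type]
  simp only [TensorProduct.tmul_sum, TensorProduct.smul_tmul_smul]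

theorem _root_.CompleteOrthogonalIdempotents.tmul (he : CompleteOrthogonalIdempotents e)
    (he' : CompleteOrthogonalIdempotents e') :
    CompleteOrthogonalIdempotents fun x : ι × κ ↦ e x.1 ⊗ₜ[K] e' x.2 := by
  classical
  refine ⟨(OrthogonalIdempotents.iff_mul_eq).2 fun x y ↦ ?_, ?_⟩
  · rw [Algebra.TensorProduct.tmul_mul_tmul, he.mul_eq, he'.mul_eq]
    by_cases h1 : x.1 = y.1 <;> by_cases h2 : x.2 = y.2 <;>
      simp [h1, h2, Prod.ext_iff]
  · rw [Fintype.sum_prod_type, Algebra.TensorProduct.one_def, ← he.complete, ← he'.complete,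
      TensorProduct.sum_tmul]
    simp only [TensorProduct.tmul_sum]

end Idempotents

section CharIdempotents

open AddMonoidAlgebra

variable {R K : Type*} [CommRing R] [Fintype R] [Field K]

theorem _root_.AddChar.IsPrimitive.sum_inv_mul_eq [DecidableEq R] {ψ : AddChar R K}
    (hψ : ψ.IsPrimitive) (s t : R) :
    ∑ m, (ψ (t * m))⁻¹ * ψ (s * m) = if s = t then (Fintype.card R : K) else 0 := by
  have h : ∀ m, (ψ (t * m))⁻¹ * ψ (s * m) = ψ (m * (s - t)) := fun m ↦ by
    rw [← AddChar.map_neg_eq_inv, ← AddChar.map_add_eq_mul]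
    ring_nf
  simp only [h, AddChar.sum_mulShift _ hψ, sub_eq_zero, Nat.cast_ite, Nat.cast_zero]

/-- `Pproj` with `ψ (t * m)` in place of `q ^ (t.val * m.val)`. -/
def charIdempotent (ψ : AddChar R K) (t : R) : K[R] :=
  (Fintype.card R : K)⁻¹ • ∑ m, (ψ (t * m))⁻¹ • single m 1

variable {ψ : AddChar R K}

theorem single_mul_charIdempotent (m t : R) :
    single m 1 * charIdempotent ψ t = ψ (t * m) • charIdempotent ψ t := by
  suffices h : single m (1 : K) * ∑ n, (ψ (t * n))⁻¹ • single n 1 =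
      ψ (t * m) • ∑ n, (ψ (t * n))⁻¹ • single n (1 : K) by
    rw [charIdempotent, mul_smul_comm, h, smul_comm]
  rw [Finset.mul_sum, Finset.smul_sum]
  refine Fintype.sum_equiv (Equiv.addLeft m) _ _ fun n ↦ ?_
  rw [Equiv.coe_addLeft, mul_smul_comm, single_mul_single, mul_one, smul_smul, mul_add,
    AddChar.map_add_eq_mul, mul_inv, mul_inv_cancel_left₀ (ψ.val_isUnit _).ne_zero]

theorem antipode_charIdempotent {F : Type*} [FunLike F K[R] K[R]]
    [LinearMapClass F K K[R] K[R]] (S : F)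
    (hS : ∀ m, S (single m 1) = single (-m) 1) (t : R) :
    S (charIdempotent ψ t) = charIdempotent ψ (-t) := by
  simp only [charIdempotent, map_smul, map_sum, hS]
  congr 1
  exact Fintype.sum_equiv (Equiv.neg R) _ _ fun m ↦ by simp

theorem antipode_sum_smul_charIdempotent {F : Type*} [FunLike F K[R] K[R]]
    [LinearMapClass F K K[R] K[R]] (S : F)
    (hS : ∀ m, S (single m 1) = single (-m) 1) (f : R → K) :
    S (∑ t, f t • charIdempotent ψ t) = ∑ t, f (-t) • charIdempotent ψ t := by
  simp only [map_sum, map_smul, antipode_charIdempotent S hS]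
  exact Fintype.sum_equiv (Equiv.neg R) _ _ fun t ↦ by simp

variable [DecidableEq R] (hψ : ψ.IsPrimitive) (hR : (Fintype.card R : K) ≠ 0)
include hψ hR

theorem charIdempotent_mul_charIdempotent (t s : R) :
    charIdempotent ψ t * charIdempotent ψ s =
      if t = s then charIdempotent ψ t else 0 := by
  nth_rw 1 [charIdempotent]
  simp only [smul_mul_assoc, Finset.sum_mul, single_mul_charIdempotent, smul_smul,
    ← Finset.sum_smul, hψ.sum_inv_mul_eq, mul_ite, mul_zero, inv_mul_cancel₀ hR]
  split_ifs with h₁ h₂ h₂ <;> simp_all [eq_comm]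

theorem sum_smul_charIdempotent (m : R) :
    ∑ t, ψ (t * m) • charIdempotent ψ t = single m 1 := by
  simp only [charIdempotent, Finset.smul_sum, smul_smul]
  rw [Finset.sum_comm]
  have h : ∀ n, ∑ t, ψ (t * m) * ((Fintype.card R : K)⁻¹ * (ψ (t * n))⁻¹) =
      if m = n then 1 else 0 := fun n ↦ by
    rw [← inv_mul_cancel₀ hR, ← mul_zero (Fintype.card R : K)⁻¹, ← mul_ite,
      ← hψ.sum_inv_mul_eq, Finset.mul_sum]
    exact Finset.sum_congr rfl fun t _ ↦ by rw [mul_comm t, mul_comm t]; ring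
  simp only [← Finset.sum_smul, h, ite_smul, one_smul, zero_smul, Finset.sum_ite_eq,
    Finset.mem_univ, if_true]

theorem completeOrthogonalIdempotents_charIdempotent :
    CompleteOrthogonalIdempotents (charIdempotent ψ) := by
  refine ⟨(OrthogonalIdempotents.iff_mul_eq).2 (charIdempotent_mul_charIdempotent hψ hR), ?_⟩
  simpa [← one_def] using sum_smul_charIdempotent hψ hR 0

theorem single_tmul_single_eq_sum (m : R) :
    single m (1 : K) ⊗ₜ[K] single m (1 : K) =
      ∑ x : R × R,
        ψ ((x.1 + x.2) * m) • (charIdempotent ψ x.1 ⊗ₜ[K] charIdempotent ψ x.2) := by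
  rw [← sum_smul_charIdempotent hψ hR m, TensorProduct.sum_smul_tmul_sum_smul]
  simp only [add_mul, AddChar.map_add_eq_mul]

theorem comul_charIdempotent {F : Type*} [FunLike F K[R] (K[R] ⊗[K] K[R])]
    [LinearMapClass F K K[R] (K[R] ⊗[K] K[R])] (Δ : F)
    (hΔ : ∀ m, Δ (single m 1) = single m 1 ⊗ₜ[K] single m 1) (t : R) :
    Δ (charIdempotent ψ t) = ∑ x : R × R,
      (if x.1 + x.2 = t then (1 : K) else 0) •
        (charIdempotent ψ x.1 ⊗ₜ[K] charIdempotent ψ x.2) := by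
  rw [charIdempotent, map_smul, map_sum]
  simp only [map_smul, hΔ, single_tmul_single_eq_sum hψ hR, Finset.smul_sum, smul_smul]
  rw [Finset.sum_comm]
  refine Finset.sum_congr rfl fun x _ ↦ ?_
  rw [← Finset.sum_smul, ← Finset.mul_sum, hψ.sum_inv_mul_eq, mul_ite, inv_mul_cancel₀ hR,
    mul_zero]

theorem comul_sum_smul_charIdempotent {F : Type*} [FunLike F K[R] (K[R] ⊗[K] K[R])]
    [LinearMapClass F K K[R] (K[R] ⊗[K] K[R])] (Δ : F)
    (hΔ : ∀ m, Δ (single m 1) = single m 1 ⊗ₜ[K] single m 1) (f : R → K) :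
    Δ (∑ t, f t • charIdempotent ψ t) = ∑ x : R × R,
      f (x.1 + x.2) • (charIdempotent ψ x.1 ⊗ₜ[K] charIdempotent ψ x.2) := by
  simp only [map_sum, map_smul, comul_charIdempotent hψ hR Δ hΔ, Finset.smul_sum, smul_smul]
  rw [Finset.sum_comm]
  simp only [← Finset.sum_smul, mul_ite, mul_one, mul_zero, Finset.sum_ite_eq,
    Finset.mem_univ, if_true]

theorem counit_charIdempotent {F : Type*} [FunLike F K[R] K]
    [LinearMapClass F K K[R] K] (ε : F)
    (hε : ∀ m, ε (single m 1) = 1) (t : R) :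
    ε (charIdempotent ψ t) = if t = 0 then 1 else 0 := by
  have h := hψ.sum_inv_mul_eq 0 t
  simp only [zero_mul, AddChar.map_zero_eq_one, mul_one] at h
  simp only [charIdempotent, map_smul, map_sum, hε, smul_eq_mul, mul_one, h, mul_ite,
    inv_mul_cancel₀ hR, mul_zero, eq_comm]

theorem counit_sum_smul_charIdempotent {F : Type*} [FunLike F K[R] K]
    [LinearMapClass F K K[R] K] (ε : F)
    (hε : ∀ m, ε (single m 1) = 1) (f : R → K) :
    ε (∑ t, f t • charIdempotent ψ t) = f 0 := by
  simp only [map_sum, map_smul, counit_charIdempotent hψ hR ε hε, smul_eq_mul, mul_ite,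
    mul_one, mul_zero, Finset.sum_ite_eq', Finset.mem_univ, if_true]

end CharIdempotents

theorem _root_.AddChar.zmodChar_mul {C : Type*} [CommMonoid C] {n : ℕ} [NeZero n] {ζ : C}
    (hζ : ζ ^ n = 1) (a b : ZMod n) : AddChar.zmodChar n hζ (a * b) = ζ ^ (a.val * b.val) := by
  rw [← AddChar.zmodChar_apply' hζ, Nat.cast_mul, ZMod.natCast_zmod_val, ZMod.natCast_zmod_val]

variable {p q} in
theorem pproj_eq_charIdempotent (hq : q ^ p = 1) :
    Pproj p q = charIdempotent (AddChar.zmodChar p hq) := by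
  ext1 t
  simp only [Pproj, charIdempotent, hgen, ZMod.card, AddChar.zmodChar_mul]

/-- the ribbon element of `Z_q` is invertible (with inverse `Σ_t q^{t²} P^t`) and
satisfies `R·R = (v ⊗ v)·Δ(v)⁻¹` (the flip of `R` equals `R`), `S(v) = v` and `ε(v) = 1`. -/
theorem ribbon (hq : IsPrimitiveRoot q p)
    (Δ : Aq p →ₐ[ℂ] Aq p ⊗[ℂ] Aq p)
    (hΔ : ∀ m : ZMod p, Δ (hgen p m) = hgen p m ⊗ₜ[ℂ] hgen p m)
    (ε : Aq p →ₐ[ℂ] ℂ) (hε : ∀ m : ZMod p, ε (hgen p m) = 1)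
    (S : Aq p →ₐ[ℂ] Aq p) (hS : ∀ m : ZMod p, S (hgen p m) = hgen p (-m)) :
    (vrib p q * (∑ t : ZMod p, q ^ (t.val * t.val) • Pproj p q t) = 1) ∧
      ((∑ t : ZMod p, q ^ (t.val * t.val) • Pproj p q t) * vrib p q = 1) ∧
      (Rmat p q * Rmat p q =
        (vrib p q ⊗ₜ[ℂ] vrib p q) * Ring.inverse (Δ (vrib p q))) ∧
      (S (vrib p q) = vrib p q) ∧
      (ε (vrib p q) = 1) := by
  set ψ := AddChar.zmodChar p hq.pow_eq_one
  have hψ : ψ.IsPrimitive := AddChar.zmodChar_primitive_of_primitive_root p hq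
  have hR : (Fintype.card (ZMod p) : ℂ) ≠ 0 := by simp [NeZero.ne p]
  have he := completeOrthogonalIdempotents_charIdempotent hψ hR
  have hψq (a b : ZMod p) : q ^ (a.val * b.val) = ψ (a * b) :=
    (AddChar.zmodChar_mul _ a b).symm
  have hP : Pproj p q = charIdempotent ψ := pproj_eq_charIdempotent hq.pow_eq_one
  have hψ_neg_mul (a : ZMod p) : ψ (-a) * ψ a = 1 := by
    rw [← AddChar.map_add_eq_mul, neg_add_cancel, AddChar.map_zero_eq_one]
  have hv : vrib p q = ∑ t, ψ (-(t * t)) • charIdempotent ψ t := by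
    simp only [vrib, hP, hψq, AddChar.map_neg_eq_inv]
  have hv_inv : ∑ t : ZMod p, q ^ (t.val * t.val) • Pproj p q t =
      ∑ t, ψ (t * t) • charIdempotent ψ t := by
    simp only [hP, hψq]
  have hRmat : Rmat p q = ∑ x : ZMod p × ZMod p,
      ψ (x.1 * x.2) • (charIdempotent ψ x.1 ⊗ₜ[ℂ] charIdempotent ψ x.2) := by
    simp only [Rmat, hP, hψq, Fintype.sum_prod_type]
  rw [hv_inv, hv]
  refine ⟨he.sum_smul_mul_sum_smul_eq_one fun t ↦ hψ_neg_mul _,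
    he.sum_smul_mul_sum_smul_eq_one fun t ↦ by rw [mul_comm, hψ_neg_mul], ?_, ?_, ?_⟩
  · rw [hRmat, TensorProduct.sum_smul_tmul_sum_smul, comul_sum_smul_charIdempotent hψ hR Δ hΔ,
      (he.tmul he).ringInverse_sum_smul fun x ↦ hψ_neg_mul ((x.1 + x.2) * (x.1 + x.2)),
      (he.tmul he).sum_smul_mul_sum_smul, (he.tmul he).sum_smul_mul_sum_smul]
    refine Finset.sum_congr rfl fun x _ ↦ congr_arg (· • _) ?_
    simp only [← AddChar.map_add_eq_mul]
    congr 1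
    ring
  · simp only [antipode_sum_smul_charIdempotent S hS, neg_mul_neg]
  · simp [counit_sum_smul_charIdempotent hψ hR ε hε]

end Stmt13
end
end

section
/- Invertibility of the S-matrix of Z_q: Let p be a positive integer and q ∈ ℂ a primitive p-th root of unity. The matrix 𝖲 ∈ Matrix (ZMod p) (ZMod p) ℂ with entries 𝖲(t, s) = q^{2 · t.val · s.val} is invertible if and only if p is odd. -/
/-!
Reindexed by `Fin p`, the matrix `q ^ (2 t s)` is the Vandermonde matrix of the powers
`(q²)⁰, …, (q²)ᵖ⁻¹`, which is nonsingular iff these are distinct, i.e. iff `q²` is a primitive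
`p`-th root of unity, i.e. iff `2` is coprime to `p`.
-/

theorem ZMod.val_finEquiv (n : ℕ) [NeZero n] (i : Fin n) : (ZMod.finEquiv n i).val = i := by
  obtain ⟨k, rfl⟩ := Nat.exists_eq_succ_of_ne_zero (NeZero.ne n)
  rfl

theorem Matrix.submatrix_finEquiv_of_pow_val_mul_val {R : Type*} [CommRing R] (n : ℕ) [NeZero n]
    (a : R) :
    (Matrix.of fun t s : ZMod n => a ^ (t.val * s.val)).submatrix (ZMod.finEquiv n)
        (ZMod.finEquiv n) = Matrix.vandermonde fun i : Fin n => a ^ (i : ℕ) := by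
  ext i j
  simp only [submatrix_apply, of_apply, vandermonde_apply, ZMod.val_finEquiv, pow_mul]

theorem IsPrimitiveRoot.iff_injective_pow_fin {M : Type*} [CommMonoid M] {ζ : M} {n : ℕ}
    (hn : 0 < n) (hζ : ζ ^ n = 1) :
    IsPrimitiveRoot ζ n ↔ Function.Injective fun i : Fin n => ζ ^ (i : ℕ) := by
  refine ⟨fun h i j hij => Fin.ext (h.pow_inj i.isLt j.isLt hij), fun h => ?_⟩
  refine IsPrimitiveRoot.mk_of_lt ζ hn hζ fun l hl hln hl1 => hl.ne' ?_
  simpa using congrArg Fin.val (@h ⟨l, hln⟩ ⟨0, hn⟩ (by simpa using hl1))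

theorem Matrix.det_of_pow_val_mul_val_ne_zero_iff {R : Type*} [CommRing R] [IsDomain R]
    {n : ℕ} [NeZero n] {ζ : R} (hζ : ζ ^ n = 1) :
    (Matrix.of fun t s : ZMod n => ζ ^ (t.val * s.val)).det ≠ 0 ↔ IsPrimitiveRoot ζ n := by
  rw [← det_submatrix_equiv_self (ZMod.finEquiv n).toEquiv,
    RingEquiv.toEquiv_eq_coe, RingEquiv.coe_toEquiv, submatrix_finEquiv_of_pow_val_mul_val,
    det_vandermonde_ne_zero_iff, IsPrimitiveRoot.iff_injective_pow_fin (Nat.pos_of_neZero n) hζ]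

namespace Stmt14

/-- the S-matrix `𝖲(t,s) = q^{2ts}` of `Z_q` is invertible if and only if `p`
is odd. -/
theorem S_matrix_invertible (p : ℕ) [NeZero p] (q : ℂ) (hq : IsPrimitiveRoot q p) :
    IsUnit (Matrix.of fun t s : ZMod p => q ^ (2 * t.val * s.val)) ↔ Odd p := by
  have hq2 : (q ^ 2) ^ p = 1 := by rw [pow_right_comm, hq.pow_eq_one, one_pow]
  simp_rw [mul_assoc 2, pow_mul q 2]
  rw [Matrix.isUnit_iff_isUnit_det, isUnit_iff_ne_zero,
    Matrix.det_of_pow_val_mul_val_ne_zero_iff hq2, hq.pow_iff_coprime (Nat.pos_of_neZero p),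
    Nat.coprime_two_left]

end Stmt14
end
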